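/- arXiv:1706.07224 — 3 statements merged into one kernel-verified Lean document; each statement's English description precedes it below -/
import Mathlib

section
/- Let Σ = (X, 𝒰, φ) be a forward-complete control system that is monotone with respect to inputs, with 𝒰(x) = 𝒰 for all x ∈ X. Suppose (i) there exists ρ ∈ K∞ such that x₋ ≤ x ≤ x₊ implies ‖x‖_X ≤ ρ(‖x₋‖_X + ‖x₊‖_X), and (ii) there exists η ∈ K∞ such that for every u ∈ 𝒰 there exist u₋, u₊ ∈ 𝒰_c with u₋ ≤ u ≤ u₊ and max(‖u₋‖_𝒰, ‖u₊‖_𝒰) ≤ η(‖u‖_𝒰). Then Σ is ISS if and only if Σ is ISS with respect to inputs in 𝒰_c. -/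
/-- Class `K`: continuous, strictly increasing, zero at zero. -/
def ClassK (γ : NNReal → NNReal) : Prop :=
  Continuous γ ∧ StrictMono γ ∧ γ 0 = 0

/-- Class `K∞`: class `K` and unbounded. -/
def ClassKInf (γ : NNReal → NNReal) : Prop :=
  ClassK γ ∧ ∀ M : NNReal, ∃ r : NNReal, M < γ r

/-- Class `KL`. -/
def ClassKL (β : NNReal → NNReal → NNReal) : Prop :=
  (∀ t : NNReal, ClassK (fun r => β r t)) ∧
    ∀ r : NNReal, 0 < r →
      Antitone (fun t => β r t) ∧
        Filter.Tendsto (fun t => β r t) Filter.atTop (nhds 0)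

/-- ISS with respect to a class of inputs `S`, for a system where every input is
admissible for every state. -/
def ISSOn {X U : Type*} [NormedAddCommGroup X] [NormedAddCommGroup U]
    (φ : NNReal → X → U → X) (S : Set U) : Prop :=
  ∃ β γ, ClassKL β ∧ ClassK γ ∧
    ∀ (x : X), ∀ u ∈ S, ∀ t : NNReal, ‖φ t x u‖₊ ≤ β ‖x‖₊ t + γ ‖u‖₊

/-!
Sandwich each input `u` between inputs `u₋ ≤ u ≤ u₊` from `Uc` whose norms are at most `η ‖u‖`.
Monotonicity gives `φ t x u₋ ≤ φ t x u ≤ φ t x u₊`, so by the state sandwich condition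
`‖φ t x u‖ ≤ ρ (‖φ t x u₋‖ + ‖φ t x u₊‖) ≤ ρ (2 (β ‖x‖ t + γ (η ‖u‖)))`, and a monotone `ρ`
satisfies `ρ (a + b) ≤ ρ (2a) + ρ (2b)`, which splits this into a `KL` and a `K` part.
-/

lemma ClassK.comp {f g : NNReal → NNReal} (hf : ClassK f) (hg : ClassK g) :
    ClassK (fun r => f (g r)) :=
  ⟨hf.1.comp hg.1, hf.2.1.comp hg.2.1, by simp [hg.2.2, hf.2.2]⟩

lemma classK_const_mul {c : NNReal} (hc : 0 < c) : ClassK (fun r => c * r) :=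
  ⟨continuous_const.mul continuous_id, fun _ _ h => mul_lt_mul_of_pos_left h hc, mul_zero c⟩

lemma ClassKL.comp_classK {ρ : NNReal → NNReal} {β : NNReal → NNReal → NNReal}
    (hρ : ClassK ρ) (hβ : ClassKL β) : ClassKL (fun r t => ρ (β r t)) := by
  refine ⟨fun t => hρ.comp (hβ.1 t), fun r hr => ?_⟩
  obtain ⟨hanti, htend⟩ := hβ.2 r hr
  refine ⟨hρ.2.1.monotone.comp_antitone hanti, ?_⟩
  simpa [Function.comp_def, hρ.2.2] using (hρ.1.tendsto 0).comp htend

lemma Monotone.map_add_le_map_two_mul_add {f : NNReal → NNReal} (hf : Monotone f)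
    (a b : NNReal) : f (a + b) ≤ f (2 * a) + f (2 * b) := by
  rcases le_total a b with hab | hab
  · exact le_add_left (hf (by rw [two_mul]; exact add_le_add_left hab b))
  · exact le_add_right (hf (by rw [two_mul]; exact add_le_add_right hab a))

lemma ISSOn.mono {X U : Type*} [NormedAddCommGroup X] [NormedAddCommGroup U]
    {φ : NNReal → X → U → X} {S T : Set U} (h : ISSOn φ T) (hST : S ⊆ T) : ISSOn φ S := by
  obtain ⟨β, γ, hβ, hγ, h⟩ := h
  exact ⟨β, γ, hβ, hγ, fun x u hu t => h x u (hST hu) t⟩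

lemma ISSOn.univ_of_sandwich {X U : Type*} [NormedAddCommGroup X] [Preorder X]
    [NormedAddCommGroup U] [Preorder U] {φ : NNReal → X → U → X} {Uc : Set U}
    (hmono : ∀ (t : NNReal) (x : X) (u₁ u₂ : U), u₁ ≤ u₂ → φ t x u₁ ≤ φ t x u₂)
    {ρ : NNReal → NNReal} (hρ : ClassK ρ)
    (hsandwich : ∀ xm x xp : X, xm ≤ x → x ≤ xp → ‖x‖₊ ≤ ρ (‖xm‖₊ + ‖xp‖₊))
    {η : NNReal → NNReal} (hη : ClassK η)
    (hinput : ∀ u : U, ∃ um ∈ Uc, ∃ up ∈ Uc, um ≤ u ∧ u ≤ up ∧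
      ‖um‖₊ ≤ η ‖u‖₊ ∧ ‖up‖₊ ≤ η ‖u‖₊)
    (hiss : ISSOn φ Uc) : ISSOn φ Set.univ := by
  obtain ⟨β, γ, hβ, hγ, h⟩ := hiss
  have hρ4 : ClassK (fun r => ρ (4 * r)) := hρ.comp (classK_const_mul (by norm_num))
  refine ⟨fun r t => ρ (4 * β r t), fun r => ρ (4 * γ (η r)),
    ClassKL.comp_classK (ρ := fun r => ρ (4 * r)) hρ4 hβ, hρ4.comp (hγ.comp hη),
    fun x u _ t => ?_⟩
  obtain ⟨um, hum, up, hup, hum_le, hle_up, hum_norm, hup_norm⟩ := hinput u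
  set a := β ‖x‖₊ t
  set b := γ (η ‖u‖₊)
  have hbound : ∀ v ∈ Uc, ‖v‖₊ ≤ η ‖u‖₊ → ‖φ t x v‖₊ ≤ a + b := fun v hv hvu =>
    (h x v hv t).trans (add_le_add_right (hγ.2.1.monotone hvu) _)
  calc ‖φ t x u‖₊ ≤ ρ (‖φ t x um‖₊ + ‖φ t x up‖₊) :=
        hsandwich _ _ _ (hmono t x um u hum_le) (hmono t x u up hle_up)
    _ ≤ ρ (2 * a + 2 * b) := hρ.2.1.monotone <| by
        rw [← mul_add, two_mul]
        exact add_le_add (hbound um hum hum_norm) (hbound up hup hup_norm)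
    _ ≤ ρ (2 * (2 * a)) + ρ (2 * (2 * b)) :=
        hρ.2.1.monotone.map_add_le_map_two_mul_add _ _
    _ = ρ (4 * a) + ρ (4 * b) := by simp only [← mul_assoc]; norm_num

/-- A monotone-w.r.t.-inputs control system (with all inputs admissible for all states)
is ISS iff it is ISS w.r.t. a subclass of inputs `Uc` satisfying the sandwich conditions. -/
theorem stmt_4 {X U : Type*} [NormedAddCommGroup X] [Preorder X]
    [NormedAddCommGroup U] [Preorder U]
    (φ : NNReal → X → U → X) (Uc : Set U)
    (hmono : ∀ (t : NNReal) (x : X) (u₁ u₂ : U), u₁ ≤ u₂ → φ t x u₁ ≤ φ t x u₂)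
    (ρ : NNReal → NNReal) (hρ : ClassKInf ρ)
    (hsandwich : ∀ xm x xp : X, xm ≤ x → x ≤ xp → ‖x‖₊ ≤ ρ (‖xm‖₊ + ‖xp‖₊))
    (η : NNReal → NNReal) (hη : ClassKInf η)
    (hinput : ∀ u : U, ∃ um ∈ Uc, ∃ up ∈ Uc, um ≤ u ∧ u ≤ up ∧
      ‖um‖₊ ≤ η ‖u‖₊ ∧ ‖up‖₊ ≤ η ‖u‖₊) :
    ISSOn φ (Set.univ : Set U) ↔ ISSOn φ Uc :=
  ⟨fun h => h.mono (Set.subset_univ Uc),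
    ISSOn.univ_of_sandwich hmono hρ.1 hsandwich hη.1 hinput⟩
end

section
/- In the setting of the characterization of ISS for monotone control systems (monotone in states and inputs), if ρ and ξ are linear, then Σ is exponentially ISS if and only if Σ is exponentially ISS with respect to inputs in 𝒰_c; and if additionally η is linear and the 𝒰_c-gain is linear, then Σ is exp-ISS with a linear gain. -/
open Filter Topology

/-- Exponential ISS w.r.t. the class of inputs `S`, for a system with admissible
input sets `adm x`. -/
def ExpISSAdmOn {X U : Type*} [NormedAddCommGroup X] [NormedAddCommGroup U]
    (φ : NNReal → X → U → X) (adm : X → Set U) (S : Set U) : Prop :=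
  ∃ M a : ℝ, 0 < M ∧ 0 < a ∧ ∃ γ, ClassKInf γ ∧
    ∀ (x : X), ∀ u ∈ adm x ∩ S, ∀ t : NNReal,
      ‖φ t x u‖ ≤ M * Real.exp (-a * t) * ‖x‖ + (γ ‖u‖₊ : ℝ)

/-- Exponential ISS with a linear gain, w.r.t. the class of inputs `S`. -/
def ExpISSLinAdmOn {X U : Type*} [NormedAddCommGroup X] [NormedAddCommGroup U]
    (φ : NNReal → X → U → X) (adm : X → Set U) (S : Set U) : Prop :=
  ∃ M a c : ℝ, 0 < M ∧ 0 < a ∧ 0 ≤ c ∧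
    ∀ (x : X), ∀ u ∈ adm x ∩ S, ∀ t : NNReal,
      ‖φ t x u‖ ≤ M * Real.exp (-a * t) * ‖x‖ + c * ‖u‖

private lemma limAux {g : NNReal → ℝ} (hg : Continuous g) (c : ℝ)
    (h : ∀ ε : NNReal, 0 < ε → c ≤ g ε) : c ≤ g 0 := by
  refine ge_of_tendsto
    ((hg.tendsto 0).mono_left nhdsWithin_le_nhds :
      Filter.Tendsto g (𝓝[>] 0) _) ?_
  exact eventually_mem_nhdsWithin.mono fun ε hε => h ε hε

private lemma auxBound {X U : Type*} [NormedAddCommGroup X] [Preorder X]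
    [NormedAddCommGroup U] [Preorder U]
    (φ : NNReal → X → U → X) (adm : X → Set U) (Uc : Set U)
    (hmono : ∀ (t : NNReal) (x₁ x₂ : X) (u₁ u₂ : U), u₁ ∈ adm x₁ → u₂ ∈ adm x₂ →
      x₁ ≤ x₂ → u₁ ≤ u₂ → φ t x₁ u₁ ≤ φ t x₂ u₂)
    (cρ cξ : NNReal)
    (hsandwich : ∀ xm x xp : X, xm ≤ x → x ≤ xp → ‖x‖₊ ≤ cρ * (‖xm‖₊ + ‖xp‖₊))
    (η : NNReal → NNReal)
    (happrox : ∀ (x : X), ∀ u ∈ adm x, ∀ ε : NNReal, 0 < ε →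
      ∃ (xm xp : X) (um up : U), um ∈ adm xm ∩ Uc ∧ up ∈ adm xp ∩ Uc ∧
        xm ≤ x ∧ x ≤ xp ∧ um ≤ u ∧ u ≤ up ∧
        max ‖um‖₊ ‖up‖₊ ≤ η (‖u‖₊ + ε) ∧
        max ‖xm‖₊ ‖xp‖₊ ≤ cξ * (‖x‖₊ + ‖u‖₊ + ε))
    (M a : ℝ) (hM : 0 ≤ M) (G : NNReal → ℝ) (hGmono : Monotone G)
    (h : ∀ (x : X), ∀ u ∈ adm x ∩ Uc, ∀ t : NNReal,
      ‖φ t x u‖ ≤ M * Real.exp (-a * t) * ‖x‖ + G ‖u‖₊)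
    (x : X) (u : U) (hu : u ∈ adm x) (t ε : NNReal) (hε : 0 < ε) :
    ‖φ t x u‖ ≤
      2 * cρ * (M * Real.exp (-a * t) * ((cξ : ℝ) * ((‖x‖₊ : ℝ) + ‖u‖₊ + ε))
        + G (η (‖u‖₊ + ε))) := by
  obtain ⟨xm, xp, um, up, hum, hup, hxm, hxp, hum2, hup2, hmaxu, hmaxx⟩ :=
    happrox x u hu ε hε
  have h1 : φ t xm um ≤ φ t x u := hmono t xm x um u hum.1 hu hxm hum2
  have h2 : φ t x u ≤ φ t xp up := hmono t x xp u up hu hup.1 hxp hup2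
  have hs := hsandwich _ _ _ h1 h2
  have hsr : ‖φ t x u‖ ≤ (cρ : ℝ) * (‖φ t xm um‖ + ‖φ t xp up‖) := by
    have := (NNReal.coe_le_coe).2 hs
    push_cast at this
    simpa [coe_nnnorm] using this
  have bm := h xm um hum t
  have bp := h xp up hup t
  have hE : 0 ≤ M * Real.exp (-a * t) := mul_nonneg hM (Real.exp_pos _).le
  have hxmn : ‖xm‖ ≤ (cξ : ℝ) * ((‖x‖₊ : ℝ) + ‖u‖₊ + ε) := by
    have := (NNReal.coe_le_coe).2 ((le_max_left _ _).trans hmaxx)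
    push_cast at this
    simpa [coe_nnnorm] using this
  have hxpn : ‖xp‖ ≤ (cξ : ℝ) * ((‖x‖₊ : ℝ) + ‖u‖₊ + ε) := by
    have := (NNReal.coe_le_coe).2 ((le_max_right _ _).trans hmaxx)
    push_cast at this
    simpa [coe_nnnorm] using this
  have hGm : G ‖um‖₊ ≤ G (η (‖u‖₊ + ε)) := hGmono ((le_max_left _ _).trans hmaxu)
  have hGp : G ‖up‖₊ ≤ G (η (‖u‖₊ + ε)) := hGmono ((le_max_right _ _).trans hmaxu)
  have Bm : ‖φ t xm um‖ ≤
      M * Real.exp (-a * t) * ((cξ : ℝ) * ((‖x‖₊ : ℝ) + ‖u‖₊ + ε)) + G (η (‖u‖₊ + ε)) :=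
    bm.trans (add_le_add (mul_le_mul_of_nonneg_left hxmn hE) hGm)
  have Bp : ‖φ t xp up‖ ≤
      M * Real.exp (-a * t) * ((cξ : ℝ) * ((‖x‖₊ : ℝ) + ‖u‖₊ + ε)) + G (η (‖u‖₊ + ε)) :=
    bp.trans (add_le_add (mul_le_mul_of_nonneg_left hxpn hE) hGp)
  calc ‖φ t x u‖ ≤ (cρ : ℝ) * (‖φ t xm um‖ + ‖φ t xp up‖) := hsr
    _ ≤ (cρ : ℝ) * ((M * Real.exp (-a * t) * ((cξ : ℝ) * ((‖x‖₊ : ℝ) + ‖u‖₊ + ε))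
          + G (η (‖u‖₊ + ε))) +
        (M * Real.exp (-a * t) * ((cξ : ℝ) * ((‖x‖₊ : ℝ) + ‖u‖₊ + ε))
          + G (η (‖u‖₊ + ε)))) :=
      mul_le_mul_of_nonneg_left (add_le_add Bm Bp) cρ.coe_nonneg
    _ = 2 * cρ * (M * Real.exp (-a * t) * ((cξ : ℝ) * ((‖x‖₊ : ℝ) + ‖u‖₊ + ε))
          + G (η (‖u‖₊ + ε))) := by ring

theorem stmt_7 {X U : Type*} [NormedAddCommGroup X] [Preorder X]
    [NormedAddCommGroup U] [Preorder U]
    (φ : NNReal → X → U → X) (adm : X → Set U) (Uc : Set U)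
    (hmono : ∀ (t : NNReal) (x₁ x₂ : X) (u₁ u₂ : U), u₁ ∈ adm x₁ → u₂ ∈ adm x₂ →
      x₁ ≤ x₂ → u₁ ≤ u₂ → φ t x₁ u₁ ≤ φ t x₂ u₂)
    (cρ cξ : NNReal) -- ρ and ξ are the linear functions s ↦ cρ·s and s ↦ cξ·s
    (hsandwich : ∀ xm x xp : X, xm ≤ x → x ≤ xp → ‖x‖₊ ≤ cρ * (‖xm‖₊ + ‖xp‖₊))
    (η : NNReal → NNReal) (hη : ClassKInf η)
    (happrox : ∀ (x : X), ∀ u ∈ adm x, ∀ ε : NNReal, 0 < ε →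
      ∃ (xm xp : X) (um up : U), um ∈ adm xm ∩ Uc ∧ up ∈ adm xp ∩ Uc ∧
        xm ≤ x ∧ x ≤ xp ∧ um ≤ u ∧ u ≤ up ∧
        max ‖um‖₊ ‖up‖₊ ≤ η (‖u‖₊ + ε) ∧
        max ‖xm‖₊ ‖xp‖₊ ≤ cξ * (‖x‖₊ + ‖u‖₊ + ε)) :
    (ExpISSAdmOn φ adm (Set.univ : Set U) ↔ ExpISSAdmOn φ adm Uc) ∧
      ((∃ cη : NNReal, ∀ r, η r = cη * r) →
        ExpISSLinAdmOn φ adm Uc → ExpISSLinAdmOn φ adm (Set.univ : Set U)) := by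
  obtain ⟨⟨hηc, hηm, hη0⟩, -⟩ := hη
  constructor
  · constructor
    · rintro ⟨M, a, hM, ha, γ, hγ, h⟩
      exact ⟨M, a, hM, ha, γ, hγ, fun x u hu t => h x u ⟨hu.1, trivial⟩ t⟩
    · rintro ⟨M, a, hM, ha, γ, hγ, h⟩
      obtain ⟨⟨hγc, hγm, hγ0⟩, -⟩ := hγ
      set K : ℝ := 2 * (cρ : ℝ) * cξ * M with hKdef
      have hK0 : 0 ≤ K := by positivity
      set γ' : NNReal → NNReal :=
        fun r => (2 * cρ * cξ * M.toNNReal) * r + (2 * cρ) * γ (η r) + r with hγ'def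
      refine ⟨max 1 K, a, lt_of_lt_of_le one_pos (le_max_left _ _), ha, γ', ?_, ?_⟩
      · refine ⟨⟨?_, ?_, ?_⟩, ?_⟩
        · exact ((continuous_const.mul continuous_id).add
            (continuous_const.mul (hγc.comp hηc))).add continuous_id
        · refine Monotone.add_strictMono ?_ strictMono_id
          intro r s hrs
          exact add_le_add (mul_le_mul_right hrs _)
            (mul_le_mul_right (hγm.monotone (hηm.monotone hrs)) _)
        · simp [hγ'def, hη0, hγ0]
        · intro N
          refine ⟨N + 1, lt_of_lt_of_le (lt_add_of_pos_right N one_pos) ?_⟩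
          simp only [hγ'def]
          exact le_add_self
      · rintro x u ⟨hu, -⟩ t
        set E : ℝ := Real.exp (-a * t) with hEdef
        have hE0 : 0 < E := Real.exp_pos _
        have hE1 : E ≤ 1 := by
          rw [hEdef, Real.exp_le_one_iff]
          have := mul_nonneg ha.le t.coe_nonneg
          linarith
        set g : NNReal → ℝ := fun ε =>
          2 * cρ * (M * E * ((cξ : ℝ) * ((‖x‖₊ : ℝ) + ‖u‖₊ + ε)) + (γ (η (‖u‖₊ + ε)) : ℝ))
          with hgdef
        have hg : Continuous g := by
          apply continuous_const.mul
          apply Continuous.add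
          · exact continuous_const.mul (continuous_const.mul
              ((continuous_const.add NNReal.continuous_coe)))
          · exact NNReal.continuous_coe.comp
              (hγc.comp (hηc.comp (continuous_const.add continuous_id)))
        have key : ∀ ε : NNReal, 0 < ε → ‖φ t x u‖ ≤ g ε := by
          intro ε hε
          exact auxBound φ adm Uc hmono cρ cξ hsandwich η happrox M a hM.le
            (fun r => (γ r : ℝ)) (fun r s hrs => by exact_mod_cast hγm.monotone hrs)
            h x u hu t ε hε
        have h0 := limAux hg _ key
        simp only [hgdef, NNReal.coe_zero, add_zero] at h0
        have hcast : (γ' ‖u‖₊ : ℝ) = K * ‖u‖ + 2 * cρ * (γ (η ‖u‖₊) : ℝ) + ‖u‖ := by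
          simp only [hγ'def, hKdef]
          push_cast [Real.coe_toNNReal _ hM.le]
          ring
        rw [hcast]
        have p1 : 0 ≤ (max 1 K - K) * (E * ‖x‖) :=
          mul_nonneg (sub_nonneg.2 (le_max_right _ _)) (mul_nonneg hE0.le (norm_nonneg _))
        have p2 : 0 ≤ K * ((1 - E) * ‖u‖) :=
          mul_nonneg hK0 (mul_nonneg (by linarith) (norm_nonneg _))
        have hxu : (‖x‖₊ : ℝ) = ‖x‖ := rfl
        have huu : (‖u‖₊ : ℝ) = ‖u‖ := rfl
        rw [hxu, huu] at h0
        have hexp : 2 * (cρ:ℝ) * (M * E * ((cξ:ℝ) * (‖x‖ + ‖u‖)) + (γ (η ‖u‖₊) : ℝ))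
            = K * (E * ‖x‖) + K * (E * ‖u‖) + 2 * (cρ:ℝ) * (γ (η ‖u‖₊) : ℝ) := by
          rw [hKdef]; ring
        rw [hexp] at h0
        nlinarith [h0, p1, p2, norm_nonneg u]
  · rintro ⟨cη, hcη⟩ ⟨M, a, c, hM, ha, hc, h⟩
    set K : ℝ := 2 * (cρ : ℝ) * cξ * M with hKdef
    have hK0 : 0 ≤ K := by positivity
    refine ⟨max 1 K, a, K + 2 * cρ * c * cη,
      lt_of_lt_of_le one_pos (le_max_left _ _), ha, by positivity, ?_⟩
    rintro x u ⟨hu, -⟩ t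
    set E : ℝ := Real.exp (-a * t) with hEdef
    have hE0 : 0 < E := Real.exp_pos _
    have hE1 : E ≤ 1 := by
      rw [hEdef, Real.exp_le_one_iff]
      have := mul_nonneg ha.le t.coe_nonneg
      linarith
    set g : NNReal → ℝ := fun ε =>
      2 * cρ * (M * E * ((cξ : ℝ) * ((‖x‖₊ : ℝ) + ‖u‖₊ + ε)) + c * ((η (‖u‖₊ + ε)) : ℝ))
      with hgdef
    have hg : Continuous g := by
      apply continuous_const.mul
      apply Continuous.add
      · exact continuous_const.mul (continuous_const.mul
          ((continuous_const.add NNReal.continuous_coe)))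
      · exact continuous_const.mul (NNReal.continuous_coe.comp
          (hηc.comp (continuous_const.add continuous_id)))
    have key : ∀ ε : NNReal, 0 < ε → ‖φ t x u‖ ≤ g ε := by
      intro ε hε
      exact auxBound φ adm Uc hmono cρ cξ hsandwich η happrox M a hM.le
        (fun r => c * (r : ℝ))
        (fun r s hrs => mul_le_mul_of_nonneg_left (by exact_mod_cast hrs) hc)
        (fun x' u' hu' t' => by simpa [coe_nnnorm] using h x' u' hu' t')
        x u hu t ε hε
    have h0 := limAux hg _ key
    simp only [hgdef, NNReal.coe_zero, add_zero] at h0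
    have hηu : ((η ‖u‖₊ : NNReal) : ℝ) = (cη : ℝ) * ‖u‖ := by
      rw [hcη]; push_cast; rfl
    rw [hηu] at h0
    have p1 : 0 ≤ (max 1 K - K) * (E * ‖x‖) :=
      mul_nonneg (sub_nonneg.2 (le_max_right _ _)) (mul_nonneg hE0.le (norm_nonneg _))
    have p2 : 0 ≤ K * ((1 - E) * ‖u‖) :=
      mul_nonneg hK0 (mul_nonneg (by linarith) (norm_nonneg _))
    have hxu : (‖x‖₊ : ℝ) = ‖x‖ := rfl
    have huu : (‖u‖₊ : ℝ) = ‖u‖ := rfl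
    rw [hxu, huu] at h0
    have hexp : 2 * (cρ:ℝ) * (M * E * ((cξ:ℝ) * (‖x‖ + ‖u‖)) + c * ((cη:ℝ) * ‖u‖))
        = K * (E * ‖x‖) + K * (E * ‖u‖) + 2 * (cρ:ℝ) * c * (cη:ℝ) * ‖u‖ := by
      rw [hKdef]; ring
    rw [hexp] at h0
    nlinarith [h0, p1, p2, norm_nonneg u]
end

section
/- Let G ⊆ ℝⁿ be open and bounded, T > 0, D = (0,T) × G, and let L be the uniformly parabolic operator (Lx)(t,z) = ∂ₜx(t,z) − Σᵢⱼ aᵢⱼ(z) ∂²x/∂zᵢ∂zⱼ(t,z) − f(z, x(t,z), ∇x(t,z)) with aᵢⱼ continuous and Σ aᵢⱼ(z)ξᵢξⱼ ≥ K|ξ|² for some K > 0. Assume for every bounded W ⊂ ℝ there is k > 0 such that w₁ > w₂ in W implies f(z,w₁,ξ) − f(z,w₂,ξ) < k(w₁ − w₂) for all z ∈ G, ξ ∈ ℝⁿ. If x, y ∈ C⁰(cl D) ∩ C^{1,2}(D) satisfy Ly ≥ 0 ≥ Lx on D, y(0,·) ≥ x(0,·) on G, and y ≥ x on [0,T] ×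 ∂G, then y(t,z) ≥ x(t,z) for all (t,z) ∈ cl D. -/
open Set

variable {n : ℕ}

/-- The gradient of `g : ℝⁿ → ℝ`. -/
noncomputable def grad (g : (Fin n → ℝ) → ℝ) (z : Fin n → ℝ) : Fin n → ℝ :=
  fun i => fderiv ℝ g z (Pi.single i 1)

/-- Second partial derivative `∂²g/∂zᵢ∂zⱼ`. -/
noncomputable def pd2 (g : (Fin n → ℝ) → ℝ) (z : Fin n → ℝ) (i j : Fin n) : ℝ :=
  fderiv ℝ (fun w => fderiv ℝ g w (Pi.single j 1)) z (Pi.single i 1)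

/-- The uniformly parabolic operator
`(Lx)(t,z) = ∂ₜx − Σᵢⱼ aᵢⱼ(z) ∂²x/∂zᵢ∂zⱼ − f(z, x, ∇x)`. -/
noncomputable def Lop (a : Fin n → Fin n → (Fin n → ℝ) → ℝ)
    (f : (Fin n → ℝ) → ℝ → (Fin n → ℝ) → ℝ)
    (x : ℝ → (Fin n → ℝ) → ℝ) (t : ℝ) (z : Fin n → ℝ) : ℝ :=
  deriv (fun s => x s z) t
    - ∑ i : Fin n, ∑ j : Fin n, a i j z * pd2 (x t) z i j
    - f z (x t z) (grad (x t) z)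

open Filter Topology Real

/-!
Put `u = (x - y) e^{-kt}`, where `k` is the one-sided Lipschitz constant of `f` on the compact
range of `x` and `y`. If `x > y` somewhere in `[0, τ] × cl G` with `τ < T`, then `u` has a positive
maximum there, at a point `(t₀, z₀)` with `t₀ > 0` and `z₀ ∈ G` because of the initial and boundary
data. At that point `∂ₜu ≥ 0` gives `∂ₜ(x - y) ≥ k (x - y)`, the gradients of `x` and `y` agree,
and the Hessian of `x - y` is negative semidefinite, so `Σ aᵢⱼ ∂ᵢⱼ(x - y) ≤ 0`. With
`f(z, x, ∇x) - f(z, y, ∇x) < k (x - y)` this yields `Ly < Lx`, contradicting `Lx ≤ 0 ≤ Ly`.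
The final time `T` is reached by continuity.
-/

theorem HasDerivAt.nonneg_of_eventually_le_nhdsLT {h : ℝ → ℝ} {d t₀ : ℝ}
    (hd : HasDerivAt h d t₀) (hmax : ∀ᶠ s in 𝓝[<] t₀, h s ≤ h t₀) : 0 ≤ d := by
  refine ge_of_tendsto ((hasDerivAt_iff_tendsto_slope.mp hd).mono_left (nhdsLT_le_nhdsNE t₀)) ?_
  filter_upwards [hmax, self_mem_nhdsWithin] with s hs hlt
  rw [slope_def_field]
  exact div_nonneg_of_nonpos (sub_nonpos.2 hs) (sub_nonpos.2 (le_of_lt hlt))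

theorem mul_le_deriv_of_eventually_mul_exp_le {g : ℝ → ℝ} {t₀ k : ℝ}
    (hg : DifferentiableAt ℝ g t₀)
    (hmax : ∀ᶠ s in 𝓝[<] t₀, g s * exp (-(k * s)) ≤ g t₀ * exp (-(k * t₀))) :
    k * g t₀ ≤ deriv g t₀ := by
  have hexp : HasDerivAt (fun s => exp (-(k * s))) (exp (-(k * t₀)) * -k) t₀ := by
    simpa using ((hasDerivAt_id' t₀).const_mul k).neg.exp
  have := (hg.hasDerivAt.mul hexp).nonneg_of_eventually_le_nhdsLT hmax
  nlinarith [exp_pos (-(k * t₀))]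

open scoped MatrixOrder in
theorem Matrix.PosSemidef.sum_sum_mul_nonneg {ι : Type*} [Fintype ι] {P : Matrix ι ι ℝ}
    (hP : P.PosSemidef) {A : Matrix ι ι ℝ} (hA : ∀ ξ : ι → ℝ, 0 ≤ ∑ i, ∑ j, A i j * ξ i * ξ j) :
    0 ≤ ∑ i, ∑ j, A i j * P i j := by
  classical
  obtain ⟨B, rfl⟩ := CStarAlgebra.nonneg_iff_eq_star_mul_self.mp hP.nonneg
  calc 0 ≤ ∑ k, ∑ i, ∑ j, A i j * B k i * B k j := Finset.sum_nonneg fun k _ => hA (B k)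
    _ = ∑ i, ∑ j, A i j * (star B * B) i j := by
      simp only [Matrix.mul_apply, Matrix.star_apply, star_trivial, Finset.mul_sum]
      rw [Finset.sum_comm]
      refine Finset.sum_congr rfl fun i _ => ?_
      rw [Finset.sum_comm]
      exact Finset.sum_congr rfl fun j _ => Finset.sum_congr rfl fun k _ => by ring

theorem ContDiffAt.differentiableAt_fderiv {E F : Type*} [NormedAddCommGroup E] [NormedSpace ℝ E]
    [NormedAddCommGroup F] [NormedSpace ℝ F] {g : E → F} {z : E} (hg : ContDiffAt ℝ 2 g z) :
    DifferentiableAt ℝ (fderiv ℝ g) z :=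
  (hg.fderiv_right (m := 1) (by norm_num)).differentiableAt one_ne_zero

theorem IsLocalMax.fderiv_fderiv_apply_self_nonpos {E : Type*} [NormedAddCommGroup E]
    [NormedSpace ℝ E] {φ : E → ℝ} {z : E} (hφ : ContDiffAt ℝ 2 φ z) (hmax : IsLocalMax φ z)
    (v : E) : fderiv ℝ (fderiv ℝ φ) z v v ≤ 0 := by
  set ℓ : ℝ → E := fun s => z + s • v
  have hℓ : ∀ s, HasDerivAt ℓ v s := fun s =>
    (((hasDerivAt_id' s).smul_const v).const_add z).congr_deriv (one_smul ℝ v)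
  have hℓ0 : ℓ 0 = z := by simp [ℓ]
  have hℓz : Tendsto ℓ (𝓝 0) (𝓝 z) := hℓ0 ▸ (hℓ 0).continuousAt.tendsto
  have hderiv : deriv (φ ∘ ℓ) =ᶠ[𝓝 0] fun s => fderiv ℝ φ (ℓ s) v := by
    filter_upwards [hℓz.eventually (hφ.eventually (by norm_num))] with s hs
    exact ((hs.differentiableAt (by norm_num)).hasFDerivAt.comp_hasDerivAt s (hℓ s)).deriv
  have hsecond : deriv (deriv (φ ∘ ℓ)) 0 = fderiv ℝ (fderiv ℝ φ) z v v := by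
    rw [hderiv.deriv_eq]
    have hD : HasFDerivAt (fderiv ℝ φ) (fderiv ℝ (fderiv ℝ φ) z) (ℓ 0) :=
      hℓ0 ▸ hφ.differentiableAt_fderiv.hasFDerivAt
    exact (((ContinuousLinearMap.apply ℝ ℝ v).hasFDerivAt).comp_hasDerivAt 0
      (hD.comp_hasDerivAt 0 (hℓ 0))).deriv
  have hmax' : IsLocalMax (φ ∘ ℓ) 0 :=
    (hℓ0 ▸ hmax : IsLocalMax φ (ℓ 0)).comp_continuous (hℓ 0).continuousAt
  by_contra! hpos
  -- a positive second derivative would make `0` also a local min, so `φ ∘ ℓ` locally constant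
  have hmin : IsLocalMin (φ ∘ ℓ) 0 :=
    isLocalMin_of_deriv_deriv_pos (hsecond ▸ hpos) hmax'.deriv_eq_zero
      ((hℓ0 ▸ hφ.continuousAt : ContinuousAt φ (ℓ 0)).comp (hℓ 0).continuousAt)
  have hconst : φ ∘ ℓ =ᶠ[𝓝 0] fun _ => (φ ∘ ℓ) 0 := by
    filter_upwards [hmax', hmin] with s h₁ h₂ using le_antisymm h₁ h₂
  have : deriv (deriv (φ ∘ ℓ)) 0 = 0 := by
    rw [hconst.deriv.deriv_eq]
    simp
  linarith

theorem pd2_eq_fderiv_fderiv {g : (Fin n → ℝ) → ℝ} {z : Fin n → ℝ}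
    (hg : DifferentiableAt ℝ (fderiv ℝ g) z) (i j : Fin n) :
    pd2 g z i j = fderiv ℝ (fderiv ℝ g) z (Pi.single i 1) (Pi.single j 1) := by
  rw [pd2, fderiv_clm_apply hg (differentiableAt_const _)]
  simp

theorem pd2_sub {g h : (Fin n → ℝ) → ℝ} {z : Fin n → ℝ}
    (hg : ContDiffAt ℝ 2 g z) (hh : ContDiffAt ℝ 2 h z) (i j : Fin n) :
    pd2 (fun w => g w - h w) z i j = pd2 g z i j - pd2 h z i j := by
  have hfderiv :
      fderiv ℝ (fun w => g w - h w) =ᶠ[𝓝 z] fun w => fderiv ℝ g w - fderiv ℝ h w := by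
    filter_upwards [hg.eventually (by norm_num), hh.eventually (by norm_num)] with w hgw hhw
    exact fderiv_fun_sub (hgw.differentiableAt (by norm_num)) (hhw.differentiableAt (by norm_num))
  have hsub := (hg.sub hh).differentiableAt_fderiv
  rw [pd2_eq_fderiv_fderiv hsub, pd2_eq_fderiv_fderiv hg.differentiableAt_fderiv,
    pd2_eq_fderiv_fderiv hh.differentiableAt_fderiv, hfderiv.fderiv_eq,
    fderiv_fun_sub hg.differentiableAt_fderiv hh.differentiableAt_fderiv]
  rfl

theorem sum_sum_mul_pd2_nonpos_of_isLocalMax {φ : (Fin n → ℝ) → ℝ} {z : Fin n → ℝ}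
    (hφ : ContDiffAt ℝ 2 φ z) (hmax : IsLocalMax φ z) {A : Matrix (Fin n) (Fin n) ℝ}
    (hA : ∀ ξ : Fin n → ℝ, 0 ≤ ∑ i, ∑ j, A i j * ξ i * ξ j) :
    ∑ i, ∑ j, A i j * pd2 φ z i j ≤ 0 := by
  set H := LinearMap.toMatrix₂' ℝ (fderiv ℝ (fderiv ℝ φ) z).toLinearMap₁₂
  have hH : ∀ i j, H i j = pd2 φ z i j := fun i j =>
    (pd2_eq_fderiv_fderiv hφ.differentiableAt_fderiv i j).symm
  have hneg : (-H).PosSemidef := by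
    refine .of_dotProduct_mulVec_nonneg ?_ fun ξ => ?_
    · ext i j
      simp [H, (hφ.isSymmSndFDerivAt (by simp)).eq (Pi.single i 1) (Pi.single j 1)]
    · rw [star_trivial, Matrix.neg_mulVec, dotProduct_neg, ← Matrix.toLinearMap₂'_apply',
        Matrix.toLinearMap₂'_toMatrix']
      simpa using hmax.fderiv_fderiv_apply_self_nonpos hφ ξ
  simpa [hH] using hneg.sum_sum_mul_nonneg hA

theorem Lop_lt_Lop_of_isLocalMax {a : Fin n → Fin n → (Fin n → ℝ) → ℝ}
    {f : (Fin n → ℝ) → ℝ → (Fin n → ℝ) → ℝ} {x y : ℝ → (Fin n → ℝ) → ℝ} {t k : ℝ}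
    {z : Fin n → ℝ} (hA : ∀ ξ : Fin n → ℝ, 0 ≤ ∑ i, ∑ j, a i j z * ξ i * ξ j)
    (hxt : DifferentiableAt ℝ (fun s => x s z) t) (hyt : DifferentiableAt ℝ (fun s => y s z) t)
    (hxz : ContDiffAt ℝ 2 (x t) z) (hyz : ContDiffAt ℝ 2 (y t) z)
    (htime : k * (x t z - y t z) ≤ deriv (fun s => x s z - y s z) t)
    (hspace : IsLocalMax (fun ζ => x t ζ - y t ζ) z)
    (hf : f z (x t z) (grad (y t) z) - f z (y t z) (grad (y t) z) < k * (x t z - y t z)) :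
    Lop a f y t z < Lop a f x t z := by
  have hgrad : grad (x t) z = grad (y t) z := by
    have h := hspace.fderiv_eq_zero
    rw [fderiv_fun_sub (hxz.differentiableAt two_ne_zero) (hyz.differentiableAt two_ne_zero),
      sub_eq_zero] at h
    unfold grad
    rw [h]
  have helliptic :
      ∑ i, ∑ j, a i j z * pd2 (x t) z i j - ∑ i, ∑ j, a i j z * pd2 (y t) z i j ≤ 0 := by
    simpa only [pd2_sub hxz hyz, mul_sub, Finset.sum_sub_distrib] using
      sum_sum_mul_pd2_nonpos_of_isLocalMax (hxz.sub hyz) hspace (A := fun i j => a i j z) hA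
  rw [deriv_fun_sub hxt hyt] at htime
  unfold Lop
  rw [hgrad]
  linarith

theorem comparison_principle_Ico {G : Set (Fin n → ℝ)} (hGopen : IsOpen G)
    (hGc : IsCompact (closure G)) {T k : ℝ} {a : Fin n → Fin n → (Fin n → ℝ) → ℝ}
    {f : (Fin n → ℝ) → ℝ → (Fin n → ℝ) → ℝ} {x y : ℝ → (Fin n → ℝ) → ℝ}
    (hA : ∀ z ∈ G, ∀ ξ : Fin n → ℝ, 0 ≤ ∑ i, ∑ j, a i j z * ξ i * ξ j)
    (hk : ∀ t ∈ Icc 0 T, ∀ z ∈ G, y t z < x t z → ∀ ξ : Fin n → ℝ,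
      f z (x t z) ξ - f z (y t z) ξ < k * (x t z - y t z))
    (hxc : ContinuousOn (fun p : ℝ × (Fin n → ℝ) => x p.1 p.2) (Icc 0 T ×ˢ closure G))
    (hyc : ContinuousOn (fun p : ℝ × (Fin n → ℝ) => y p.1 p.2) (Icc 0 T ×ˢ closure G))
    (hxt : ∀ t ∈ Ioo 0 T, ∀ z ∈ G, DifferentiableAt ℝ (fun s => x s z) t)
    (hyt : ∀ t ∈ Ioo 0 T, ∀ z ∈ G, DifferentiableAt ℝ (fun s => y s z) t)
    (hxz : ∀ t ∈ Ioo 0 T, ∀ z ∈ G, ContDiffAt ℝ 2 (x t) z)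
    (hyz : ∀ t ∈ Ioo 0 T, ∀ z ∈ G, ContDiffAt ℝ 2 (y t) z)
    (hLy : ∀ t ∈ Ioo 0 T, ∀ z ∈ G, 0 ≤ Lop a f y t z)
    (hLx : ∀ t ∈ Ioo 0 T, ∀ z ∈ G, Lop a f x t z ≤ 0)
    (hinit : ∀ z ∈ G, x 0 z ≤ y 0 z)
    (hbdry : ∀ t ∈ Icc 0 T, ∀ z ∈ frontier G, x t z ≤ y t z) :
    ∀ t ∈ Ico 0 T, ∀ z ∈ closure G, x t z ≤ y t z := by
  intro τ hτ z₁ hz₁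
  by_contra! hlt
  set u : ℝ × (Fin n → ℝ) → ℝ := fun p => (x p.1 p.2 - y p.1 p.2) * exp (-(k * p.1))
  have hD : Icc 0 τ ×ˢ closure G ⊆ Icc 0 T ×ˢ closure G :=
    prod_mono (Icc_subset_Icc_right hτ.2.le) subset_rfl
  have hτz₁ : (τ, z₁) ∈ Icc 0 τ ×ˢ closure G := ⟨right_mem_Icc.2 hτ.1, hz₁⟩
  obtain ⟨⟨t₀, z₀⟩, ⟨ht₀, hz₀⟩, hmax⟩ := (isCompact_Icc.prod hGc).exists_isMaxOn ⟨_, hτz₁⟩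
    (((hxc.mono hD).sub (hyc.mono hD)).mul (by fun_prop) : ContinuousOn u _)
  have hmax' : ∀ s ∈ Icc 0 τ, ∀ ζ ∈ closure G, u (s, ζ) ≤ u (t₀, z₀) := fun s hs ζ hζ =>
    hmax (mk_mem_prod hs hζ)
  have hpos : y t₀ z₀ < x t₀ z₀ := by
    have : 0 < u (t₀, z₀) := (mul_pos (sub_pos.2 hlt) (exp_pos _)).trans_le (hmax hτz₁)
    exact sub_pos.1 (pos_of_mul_pos_left this (exp_pos _).le)
  have hz₀G : z₀ ∈ G := by
    by_contra hz
    exact (hbdry t₀ (hD ⟨ht₀, hz₀⟩).1 z₀ ⟨hz₀, by rwa [hGopen.interior_eq]⟩).not_gt hpos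
  have ht₀T : t₀ ∈ Ioo 0 T :=
    ⟨ht₀.1.lt_of_ne (by rintro rfl; exact (hinit z₀ hz₀G).not_gt hpos), ht₀.2.trans_lt hτ.2⟩
  have htime : k * (x t₀ z₀ - y t₀ z₀) ≤ deriv (fun s => x s z₀ - y s z₀) t₀ := by
    refine mul_le_deriv_of_eventually_mul_exp_le
      ((hxt t₀ ht₀T z₀ hz₀G).sub (hyt t₀ ht₀T z₀ hz₀G)) ?_
    filter_upwards [Ioo_mem_nhdsLT ht₀T.1] with s hs
    exact hmax' s ⟨hs.1.le, hs.2.le.trans ht₀.2⟩ z₀ hz₀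
  have hspace : IsLocalMax (fun ζ => x t₀ ζ - y t₀ ζ) z₀ := by
    filter_upwards [hGopen.mem_nhds hz₀G] with ζ hζ
    exact le_of_mul_le_mul_right (hmax' t₀ ht₀ ζ (subset_closure hζ)) (exp_pos _)
  exact (Lop_lt_Lop_of_isLocalMax (hA z₀ hz₀G) (hxt t₀ ht₀T z₀ hz₀G) (hyt t₀ ht₀T z₀ hz₀G)
    (hxz t₀ ht₀T z₀ hz₀G) (hyz t₀ ht₀T z₀ hz₀G) htime hspace
    (hk t₀ (hD ⟨ht₀, hz₀⟩).1 z₀ hz₀G hpos _)).not_ge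
    ((hLx t₀ ht₀T z₀ hz₀G).trans (hLy t₀ ht₀T z₀ hz₀G))

theorem stmt_10_general (G : Set (Fin n → ℝ)) (hGopen : IsOpen G)
    (hGbdd : Bornology.IsBounded G) (T : ℝ) (hT : 0 < T)
    (a : Fin n → Fin n → (Fin n → ℝ) → ℝ)
    (K : ℝ) (hK : 0 < K)
    (hpar : ∀ z ∈ closure G, ∀ ξ : Fin n → ℝ,
      K * (∑ i, ξ i ^ 2) ≤ ∑ i : Fin n, ∑ j : Fin n, a i j z * ξ i * ξ j)
    (f : (Fin n → ℝ) → ℝ → (Fin n → ℝ) → ℝ)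
    (hlip : ∀ W : Set ℝ, Bornology.IsBounded W → ∃ k > (0:ℝ),
      ∀ w₁ ∈ W, ∀ w₂ ∈ W, w₂ < w₁ → ∀ z ∈ G, ∀ ξ : Fin n → ℝ,
        f z w₁ ξ - f z w₂ ξ < k * (w₁ - w₂))
    (x y : ℝ → (Fin n → ℝ) → ℝ)
    -- x, y ∈ C⁰(cl D) ∩ C^{1,2}(D), with D = (0,T) × G
    (hxc : ContinuousOn (fun p : ℝ × (Fin n → ℝ) => x p.1 p.2) (Icc 0 T ×ˢ closure G))
    (hyc : ContinuousOn (fun p : ℝ × (Fin n → ℝ) => y p.1 p.2) (Icc 0 T ×ˢ closure G))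
    (hxt : ∀ t ∈ Ioo 0 T, ∀ z ∈ G, DifferentiableAt ℝ (fun s => x s z) t)
    (hyt : ∀ t ∈ Ioo 0 T, ∀ z ∈ G, DifferentiableAt ℝ (fun s => y s z) t)
    (hxz : ∀ t ∈ Ioo 0 T, ∀ z ∈ G, ContDiffAt ℝ 2 (x t) z)
    (hyz : ∀ t ∈ Ioo 0 T, ∀ z ∈ G, ContDiffAt ℝ 2 (y t) z)
    (hLy : ∀ t ∈ Ioo 0 T, ∀ z ∈ G, 0 ≤ Lop a f y t z)
    (hLx : ∀ t ∈ Ioo 0 T, ∀ z ∈ G, Lop a f x t z ≤ 0)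
    (hinit : ∀ z ∈ G, x 0 z ≤ y 0 z)
    (hbdry : ∀ t ∈ Icc 0 T, ∀ z ∈ frontier G, x t z ≤ y t z) :
    ∀ t ∈ Icc 0 T, ∀ z ∈ closure G, x t z ≤ y t z := by
  have hGc : IsCompact (closure G) := hGbdd.isCompact_closure
  have hDc : IsCompact (Icc 0 T ×ˢ closure G) := isCompact_Icc.prod hGc
  obtain ⟨k, -, hk⟩ := hlip _
    ((hDc.image_of_continuousOn hxc).union (hDc.image_of_continuousOn hyc)).isBounded
  have hA : ∀ z ∈ G, ∀ ξ : Fin n → ℝ, 0 ≤ ∑ i, ∑ j, a i j z * ξ i * ξ j := fun z hz ξ =>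
    le_trans (by positivity) (hpar z (subset_closure hz) ξ)
  have hlt := comparison_principle_Ico hGopen hGc hA
    (fun t ht z hz hxy => hk _ (Or.inl ⟨(t, z), ⟨ht, subset_closure hz⟩, rfl⟩)
      _ (Or.inr ⟨(t, z), ⟨ht, subset_closure hz⟩, rfl⟩) hxy z hz)
    hxc hyc hxt hyt hxz hyz hLy hLx hinit hbdry
  have hIco : Ico 0 T ×ˢ closure G ⊆ Icc 0 T ×ˢ closure G :=
    prod_mono Ico_subset_Icc_self subset_rfl
  have hclosure : Icc 0 T ×ˢ closure G ⊆ closure (Ico 0 T ×ˢ closure G) := by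
    rw [closure_prod_eq, closure_Ico hT.ne, closure_closure]
  intro t ht z hz
  exact ContinuousWithinAt.closure_le (f := fun p => x p.1 p.2) (g := fun p => y p.1 p.2)
    (hclosure (mk_mem_prod ht hz)) ((hxc _ (mk_mem_prod ht hz)).mono hIco)
    ((hyc _ (mk_mem_prod ht hz)).mono hIco)
    fun p hp => hlt p.1 hp.1 p.2 hp.2

/-- Comparison principle for uniformly parabolic operators. -/
theorem stmt_10 (G : Set (Fin n → ℝ)) (hGopen : IsOpen G)
    (hGbdd : Bornology.IsBounded G) (T : ℝ) (hT : 0 < T)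
    (a : Fin n → Fin n → (Fin n → ℝ) → ℝ)
    (ha : ∀ i j, ContinuousOn (a i j) (closure G))
    (K : ℝ) (hK : 0 < K)
    (hpar : ∀ z ∈ closure G, ∀ ξ : Fin n → ℝ,
      K * (∑ i, ξ i ^ 2) ≤ ∑ i : Fin n, ∑ j : Fin n, a i j z * ξ i * ξ j)
    (f : (Fin n → ℝ) → ℝ → (Fin n → ℝ) → ℝ)
    (hf : Continuous fun p : (Fin n → ℝ) × ℝ × (Fin n → ℝ) => f p.1 p.2.1 p.2.2)
    (hlip : ∀ W : Set ℝ, Bornology.IsBounded W → ∃ k > (0:ℝ),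
      ∀ w₁ ∈ W, ∀ w₂ ∈ W, w₂ < w₁ → ∀ z ∈ G, ∀ ξ : Fin n → ℝ,
        f z w₁ ξ - f z w₂ ξ < k * (w₁ - w₂))
    (x y : ℝ → (Fin n → ℝ) → ℝ)
    -- x, y ∈ C⁰(cl D) ∩ C^{1,2}(D), with D = (0,T) × G
    (hxc : ContinuousOn (fun p : ℝ × (Fin n → ℝ) => x p.1 p.2) (Icc 0 T ×ˢ closure G))
    (hyc : ContinuousOn (fun p : ℝ × (Fin n → ℝ) => y p.1 p.2) (Icc 0 T ×ˢ closure G))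
    (hxt : ∀ t ∈ Ioo 0 T, ∀ z ∈ G, DifferentiableAt ℝ (fun s => x s z) t)
    (hyt : ∀ t ∈ Ioo 0 T, ∀ z ∈ G, DifferentiableAt ℝ (fun s => y s z) t)
    (hxz : ∀ t ∈ Ioo 0 T, ∀ z ∈ G, ContDiffAt ℝ 2 (x t) z)
    (hyz : ∀ t ∈ Ioo 0 T, ∀ z ∈ G, ContDiffAt ℝ 2 (y t) z)
    (hLy : ∀ t ∈ Ioo 0 T, ∀ z ∈ G, 0 ≤ Lop a f y t z)
    (hLx : ∀ t ∈ Ioo 0 T, ∀ z ∈ G, Lop a f x t z ≤ 0)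
    (hinit : ∀ z ∈ G, x 0 z ≤ y 0 z)
    (hbdry : ∀ t ∈ Icc 0 T, ∀ z ∈ frontier G, x t z ≤ y t z) :
    ∀ t ∈ Icc 0 T, ∀ z ∈ closure G, x t z ≤ y t z :=
  stmt_10_general G hGopen hGbdd T hT a K hK hpar f hlip x y hxc hyc hxt hyt hxz hyz hLy hLx hinit
    hbdry
end
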